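/- For all integers m ≥ 0 and 0 ≤ j ≤ m: the absolute value of the determinant of G(m, j) equals ∏_{i=0}^{j} 2^{(j−i)·C(m,i)} (this is the volume of the lattice Λ(m, j)), and for every coordinate index i the vector 2ʲ·eᵢ belongs to Λ(m, j); hence Λ(m, j) can be reduced to a code of length 2ᵐ over ℤ_{2ʲ}. -/

import Mathlib

/-!
`H(m+1) = [[H m, H m], [0, H m]]` is unitriangular, so `det H m = 1` and `G(m, j) = D * H m` with
`D` diagonal, `D s = 2 ^ (j - ℓ s)` where `2 ^ ℓ s` is the weight of row `s`. Hence
`|det G(m, j)| = ∏ s, 2 ^ (j - ℓ s)`, and since a row of the top half of `H(m+1)` has twice the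
weight of the corresponding row of `H m` while a row of the bottom half has the same weight,
exactly `C(m, i)` rows of `H m` have weight `2 ^ i` (Pascal's rule). Finally every `D s` divides
`2 ^ j`, so `2 ^ j • eᵢ = (2 ^ j • eᵢ ⬝ H⁻¹ ⬝ D⁻¹) ⬝ G` with an integral coefficient vector.
-/

/-- `Hmat m` : the `2^m × 2^m` matrix defined by `H₀ = [1]` and
`H_{m+1} = [[Hₘ, Hₘ], [0, Hₘ]]` in block form. -/
def Hmat : (m : ℕ) → Matrix (Fin (2 ^ m)) (Fin (2 ^ m)) ℤ
  | 0 => Matrix.of fun _ _ => 1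
  | m + 1 =>
      Matrix.reindex
        (finSumFinEquiv.trans (finCongr (by rw [pow_succ, mul_two] :
          2 ^ m + 2 ^ m = 2 ^ (m + 1))))
        (finSumFinEquiv.trans (finCongr (by rw [pow_succ, mul_two] :
          2 ^ m + 2 ^ m = 2 ^ (m + 1))))
        (Matrix.fromBlocks (Hmat m) (Hmat m) 0 (Hmat m))

/-- `Smat m` : the `2^m × 2^m` Sylvester Hadamard matrix, `𝓗₀ = [1]`,
`𝓗_{m+1} = [[𝓗ₘ, 𝓗ₘ], [𝓗ₘ, −𝓗ₘ]]`. -/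
def Smat : (m : ℕ) → Matrix (Fin (2 ^ m)) (Fin (2 ^ m)) ℤ
  | 0 => Matrix.of fun _ _ => 1
  | m + 1 =>
      Matrix.reindex
        (finSumFinEquiv.trans (finCongr (by rw [pow_succ, mul_two] :
          2 ^ m + 2 ^ m = 2 ^ (m + 1))))
        (finSumFinEquiv.trans (finCongr (by rw [pow_succ, mul_two] :
          2 ^ m + 2 ^ m = 2 ^ (m + 1))))
        (Matrix.fromBlocks (Smat m) (Smat m) (Smat m) (-(Smat m)))

/-- Hamming weight of the `s`-th row of `Hmat m`. -/
def rowWeight (m : ℕ) (s : Fin (2 ^ m)) : ℕ :=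
  (Finset.univ.filter (fun t => Hmat m s t ≠ 0)).card

/-- `Gmat m j` : the matrix whose `s`-th row is the `s`-th row of `Hmat m`
multiplied by `2^(j − ℓ)` (truncated subtraction) where `2^ℓ` is the Hamming
weight of that row. -/
def Gmat (m j : ℕ) : Matrix (Fin (2 ^ m)) (Fin (2 ^ m)) ℤ :=
  Matrix.of fun s t => (2 : ℤ) ^ (j - Nat.log 2 (rowWeight m s)) * Hmat m s t

/-- The lattice generated by the rows of `G`. -/
def latticeOf {n : ℕ} (G : Matrix (Fin n) (Fin n) ℤ) : Set (Fin n → ℤ) :=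
  { x | ∃ u : Fin n → ℤ, x = Matrix.vecMul u G }

open Finset Matrix

theorem prod_range_pow_choose_succ {M : Type*} [CommMonoid M] (f : ℕ → M) (m : ℕ) :
    ∏ i ∈ range (m + 2), f i ^ (m + 1).choose i =
      (∏ i ∈ range (m + 1), f (i + 1) ^ m.choose i) * ∏ i ∈ range (m + 1), f i ^ m.choose i := by
  rw [prod_range_succ', prod_range_succ' (fun i => f i ^ m.choose i)]
  simp only [Nat.choose_succ_succ', pow_add, prod_mul_distrib, Nat.choose_zero_right]
  rw [prod_range_succ (fun i => f (i + 1) ^ m.choose (i + 1)), Nat.choose_succ_self, pow_zero,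
    mul_one]
  ac_rfl

theorem exists_single_eq_vecMul_diagonal_mul {R n : Type*} [CommRing R] [Fintype n]
    [DecidableEq n] {d : n → R} {H : Matrix n n R} (hH : IsUnit H.det) {c : R}
    (hd : ∀ s, d s ∣ c) (i : n) : ∃ u : n → R, Pi.single i c = u ᵥ* (diagonal d * H) := by
  choose w hw using hd
  refine ⟨fun t => H⁻¹ i t * w t, ?_⟩
  have hscale : (fun t => H⁻¹ i t * w t) ᵥ* diagonal d = Pi.single i c ᵥ* H⁻¹ := by
    ext t
    rw [vecMul_diagonal, single_vecMul, Pi.smul_apply, row_apply, smul_eq_mul, hw t]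
    ring
  rw [← vecMul_vecMul, hscale, vecMul_vecMul, nonsing_inv_mul _ hH, vecMul_one]

def finTwoPowSumEquiv (m : ℕ) : Fin (2 ^ m) ⊕ Fin (2 ^ m) ≃ Fin (2 ^ (m + 1)) :=
  finSumFinEquiv.trans (finCongr (by rw [pow_succ, mul_two]))

theorem Hmat_succ (m : ℕ) :
    Hmat (m + 1) = reindex (finTwoPowSumEquiv m) (finTwoPowSumEquiv m)
      (fromBlocks (Hmat m) (Hmat m) 0 (Hmat m)) := rfl

theorem det_Hmat (m : ℕ) : (Hmat m).det = 1 := by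
  induction m with
  | zero => exact (det_fin_one _).trans rfl
  | succ m ih => rw [Hmat_succ, det_reindex_self, det_fromBlocks_zero₂₁, ih, mul_one]

theorem rowWeight_zero (s : Fin (2 ^ 0)) : rowWeight 0 s = 1 := by
  simp [rowWeight, Hmat]

theorem rowWeight_succ_inl (m : ℕ) (s : Fin (2 ^ m)) :
    rowWeight (m + 1) (finTwoPowSumEquiv m (.inl s)) = 2 * rowWeight m s := by
  simp only [rowWeight, card_filter]
  rw [← (finTwoPowSumEquiv m).sum_comp, Fintype.sum_sum_type, Hmat_succ]
  simp [two_mul]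

theorem rowWeight_succ_inr (m : ℕ) (s : Fin (2 ^ m)) :
    rowWeight (m + 1) (finTwoPowSumEquiv m (.inr s)) = rowWeight m s := by
  simp only [rowWeight, card_filter]
  rw [← (finTwoPowSumEquiv m).sum_comp, Fintype.sum_sum_type, Hmat_succ]
  simp

theorem rowWeight_pos (m : ℕ) (s : Fin (2 ^ m)) : 0 < rowWeight m s := by
  induction m with
  | zero => simp [rowWeight_zero]
  | succ m ih =>
    obtain ⟨s | s, rfl⟩ := (finTwoPowSumEquiv m).surjective s
    · simpa [rowWeight_succ_inl] using ih s
    · simpa [rowWeight_succ_inr] using ih s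

theorem prod_log_rowWeight {M : Type*} [CommMonoid M] (m : ℕ) (f : ℕ → M) :
    ∏ s, f (Nat.log 2 (rowWeight m s)) = ∏ i ∈ range (m + 1), f i ^ m.choose i := by
  induction m generalizing f with
  | zero => simp [rowWeight_zero]
  | succ m ih =>
    have hlog_inl (s : Fin (2 ^ m)) :
        Nat.log 2 (rowWeight (m + 1) (finTwoPowSumEquiv m (.inl s))) =
          Nat.log 2 (rowWeight m s) + 1 := by
      rw [rowWeight_succ_inl, mul_comm, Nat.log_mul_base one_lt_two (rowWeight_pos m s).ne']
    rw [← (finTwoPowSumEquiv m).prod_comp, Fintype.prod_sum_type]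
    simp only [hlog_inl, rowWeight_succ_inr]
    rw [ih (fun i => f (i + 1)), ih, prod_range_pow_choose_succ]

theorem Gmat_eq_diagonal_mul (m j : ℕ) :
    Gmat m j = diagonal (fun s => (2 : ℤ) ^ (j - Nat.log 2 (rowWeight m s))) * Hmat m := by
  ext s t
  simp [Gmat, diagonal_mul]

/-- The volume of `Λ(m, j)` (the absolute value of `det G(m, j)`) equals
`∏_{i=0}^{j} 2^{(j−i)·C(m,i)}`, and `2^j • eᵢ ∈ Λ(m, j)` for every coordinate
`i`; hence `Λ(m, j)` reduces to a code of length `2^m` over `ℤ_{2^j}`. -/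
theorem det_Gmj_and_two_pow_single_mem (m j : ℕ) (hj : j ≤ m) :
    (Gmat m j).det.natAbs = ∏ i ∈ Finset.range (j + 1), 2 ^ ((j - i) * m.choose i) ∧
    ∀ i : Fin (2 ^ m), (Pi.single i ((2 : ℤ) ^ j) : Fin (2 ^ m) → ℤ) ∈ latticeOf (Gmat m j) := by
  refine ⟨?_, fun i => ?_⟩
  · have hdet : (Gmat m j).det = ((∏ s, 2 ^ (j - Nat.log 2 (rowWeight m s)) : ℕ) : ℤ) := by
      rw [Gmat_eq_diagonal_mul, det_mul, det_diagonal, det_Hmat, mul_one]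
      push_cast
      rfl
    rw [hdet, Int.natAbs_natCast, prod_log_rowWeight m (fun i => 2 ^ (j - i))]
    simp only [← pow_mul]
    refine (prod_subset (range_subset_range.2 (by omega)) fun i _ hi => ?_).symm
    rw [mem_range, not_lt] at hi
    rw [Nat.sub_eq_zero_of_le (Nat.le_of_succ_le hi), zero_mul, pow_zero]
  · rw [Gmat_eq_diagonal_mul]
    refine exists_single_eq_vecMul_diagonal_mul (by simp [det_Hmat]) (fun s => ?_) i
    exact pow_dvd_pow 2 (Nat.sub_le _ _)
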